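/- arXiv:1811.04692 — 6 statements merged into one kernel-verified Lean document; each statement's English description precedes it below -/
import Mathlib

section
/- Let B be a finite acyclic simple graph and A a set of vertices of B. Then A ≤* B if and only if there is no edge of B with one endpoint in A and the other endpoint in B \ A. -/
/-!
In a forest, every nonempty finite vertex set `S` spans fewer than `|S|` edges: the induced
forest on `S` extends to a spanning tree of the complete graph on `S`, which has `|S| - 1` edges.
Hence `δ > 0` on nonempty sets. If no edge leaves `A`, then for `A ⊊ C` the edges spanned by `C`
are those spanned by `A` together with those spanned by `C \ A`, so
`δ(C) = δ(A) + δ(C \ A) > δ(A)`. Conversely, if an edge `uv` has `u ∈ A`, `v ∉ A`, then adding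
`v` to `A` adds one vertex and at least one edge, so `δ(A ∪ {v}) ≤ δ(A)`.
-/

open scoped Classical

/-- The set of edges of `G` with both endpoints in the finite vertex set `S`. -/
noncomputable def edgesWithin {V : Type*} (G : SimpleGraph V) (S : Finset V) :
    Finset (Sym2 V) :=
  S.sym2.filter (fun e => e ∈ G.edgeSet)

/-- The predimension `δ(S) = |S| - |{edges of G with both endpoints in S}|`. -/
noncomputable def delta {V : Type*} (G : SimpleGraph V) (S : Finset V) : ℤ :=
  (S.card : ℤ) - ((edgesWithin G S).card : ℤ)

open SimpleGraph Finset

namespace SimpleGraph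

variable {V : Type*} {G : SimpleGraph V}

theorem IsAcyclic.card_edgeFinset_lt_card [Fintype V] [Nonempty V] [Fintype G.edgeSet]
    (hG : G.IsAcyclic) : #G.edgeFinset < Fintype.card V := by
  obtain ⟨T, hGT, -, hT⟩ := connected_top.exists_isTree_le_of_le_of_isAcyclic le_top hG
  have hcard := hT.card_edgeFinset
  have hle := card_le_card (edgeFinset_mono hGT)
  omega

@[simp]
theorem mk_mem_edgesWithin {S : Finset V} {u v : V} :
    s(u, v) ∈ edgesWithin G S ↔ u ∈ S ∧ v ∈ S ∧ G.Adj u v := by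
  simp [edgesWithin, and_assoc]

theorem edgesWithin_mono {S T : Finset V} (h : S ⊆ T) : edgesWithin G S ⊆ edgesWithin G T :=
  filter_subset_filter _ (sym2_mono h)

theorem edgesWithin_eq_map_induce (S : Finset V) :
    edgesWithin G S = (G.induce (S : Set V)).edgeFinset.map
      ⟨Sym2.map Subtype.val, Sym2.map.injective Subtype.val_injective⟩ := by
  ext e
  simp only [mem_map, mem_edgeFinset, Function.Embedding.coeFn_mk]
  constructor
  · induction e with
    | _ u v =>
      rintro huv
      rw [mk_mem_edgesWithin] at huv
      exact ⟨s(⟨u, huv.1⟩, ⟨v, huv.2.1⟩), by simpa using huv.2.2, rfl⟩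
  · rintro ⟨e, he, rfl⟩
    induction e with
    | _ a b => simpa [a.2, b.2] using he

theorem IsAcyclic.card_edgesWithin_lt (hG : G.IsAcyclic) {S : Finset V} (hS : S.Nonempty) :
    #(edgesWithin G S) < #S := by
  have : Nonempty (S : Set V) := hS.coe_sort
  simpa [edgesWithin_eq_map_induce] using (hG.induce (S : Set V)).card_edgeFinset_lt_card

theorem IsAcyclic.delta_pos (hG : G.IsAcyclic) {S : Finset V} (hS : S.Nonempty) :
    0 < delta G S := by
  have := hG.card_edgesWithin_lt hS
  unfold delta
  omega

theorem edgesWithin_union_of_forall_not_adj {S T : Finset V}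
    (h : ∀ u ∈ S, ∀ v ∈ T, ¬G.Adj u v) :
    edgesWithin G (S ∪ T) = edgesWithin G S ∪ edgesWithin G T := by
  ext e
  induction e with
  | _ u v =>
    simp only [mem_union, mk_mem_edgesWithin]
    grind [G.adj_symm]

theorem disjoint_edgesWithin {S T : Finset V} (h : Disjoint S T) :
    Disjoint (edgesWithin G S) (edgesWithin G T) := by
  rw [Finset.disjoint_left]
  intro e hS hT
  induction e with
  | _ u v =>
    rw [mk_mem_edgesWithin] at hS hT
    exact Finset.disjoint_left.mp h hS.1 hT.1

theorem delta_union_of_forall_not_adj {S T : Finset V} (hST : Disjoint S T)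
    (h : ∀ u ∈ S, ∀ v ∈ T, ¬G.Adj u v) : delta G (S ∪ T) = delta G S + delta G T := by
  simp only [delta, edgesWithin_union_of_forall_not_adj h,
    card_union_of_disjoint hST, card_union_of_disjoint (disjoint_edgesWithin hST)]
  push_cast
  ring

theorem delta_insert_le_of_adj {S : Finset V} {u v : V} (hu : u ∈ S) (hv : v ∉ S)
    (huv : G.Adj u v) : delta G (insert v S) ≤ delta G S := by
  have hlt : #(edgesWithin G S) < #(edgesWithin G (insert v S)) := by
    refine card_lt_card ⟨edgesWithin_mono (subset_insert v S), fun h => hv ?_⟩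
    have huv_mem : s(u, v) ∈ edgesWithin G (insert v S) := by simp [hu, huv]
    exact (mk_mem_edgesWithin.mp (h huv_mem)).2.1
  simp only [delta, card_insert_of_notMem hv]
  omega

end SimpleGraph

theorem stmt_2_general {V : Type*} (B : SimpleGraph V) (hB : B.IsAcyclic)
    (A : Finset V) :
    (∀ C : Finset V, A ⊂ C → delta B A < delta B C) ↔
      (∀ u v : V, B.Adj u v → u ∈ A → v ∈ A) := by
  constructor
  · intro hA u v huv hu
    by_contra hv
    exact (delta_insert_le_of_adj hu hv huv).not_gt (hA _ (ssubset_insert hv))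
  · intro hclosed C hAC
    have hsplit : delta B C = delta B A + delta B (C \ A) := by
      rw [← delta_union_of_forall_not_adj disjoint_sdiff, union_sdiff_of_subset hAC.subset]
      intro u hu v hv huv
      exact (mem_sdiff.mp hv).2 (hclosed u v huv hu)
    have := hB.delta_pos (sdiff_nonempty.mpr hAC.not_subset)
    omega

/-- Let `B` be a finite acyclic simple graph (with vertex type `V`) and `A` a set of its
vertices.  Then `A ≤* B` (i.e. `δ(C) > δ(A)` for every `C` with `A ⊊ C`) iff there
is no edge of `B` with one endpoint in `A` and the other outside `A`. -/
theorem stmt_2 {V : Type*} [Fintype V] (B : SimpleGraph V) (hB : B.IsAcyclic)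
    (A : Finset V) :
    (∀ C : Finset V, A ⊂ C → delta B A < delta B C) ↔
      (∀ u v : V, B.Adj u v → u ∈ A → v ∈ A) :=
  stmt_2_general B hB A
end

section
/- Let B be a finite acyclic simple graph and A ⊊ B a set of vertices such that (A,B) is a minimal pair. Then B \ A consists of a single vertex b; moreover, if δ(B/A) = 0 then b has exactly one neighbor in A, and if δ(B/A) < 0 then b has at least two neighbors in A. -/
open scoped Classical

/-- `A ≤* C` inside the graph `G`: `δ(D) > δ(A)` for every `D` with `A ⊊ D ⊆ C`. -/
noncomputable def ClosedIn {V : Type*} (G : SimpleGraph V) (A C : Finset V) : Prop :=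
  ∀ D : Finset V, A ⊂ D → D ⊆ C → delta G A < delta G D

section Aux

variable {V : Type*} {G : SimpleGraph V}

lemma mem_edgesWithin {S : Finset V} {x y : V} :
    s(x, y) ∈ edgesWithin G S ↔ (x ∈ S ∧ y ∈ S) ∧ G.Adj x y := by
  simp [edgesWithin, Finset.mem_filter, Finset.mk_mem_sym2_iff, SimpleGraph.mem_edgeSet]

lemma edgesWithin_insert {S : Finset V} {t : V} (ht : t ∉ S) :
    (edgesWithin G (insert t S)).card
      = (edgesWithin G S).card + (S.filter (fun a => G.Adj t a)).card := by
  have hset : edgesWithin G (insert t S)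
      = edgesWithin G S ∪ (S.filter (fun a => G.Adj t a)).image (fun a => s(t, a)) := by
    ext e
    induction e using Sym2.ind with
    | _ x y =>
      simp only [mem_edgesWithin, Finset.mem_union, Finset.mem_image, Finset.mem_filter,
        Finset.mem_insert]
      constructor
      · rintro ⟨⟨hx | hx, hy | hy⟩, hadj⟩
        · exact absurd (hx.trans hy.symm) hadj.ne
        · subst hx; exact Or.inr ⟨y, ⟨hy, hadj⟩, rfl⟩
        · subst hy; exact Or.inr ⟨x, ⟨hx, hadj.symm⟩, Sym2.eq_swap⟩
        · exact Or.inl ⟨⟨hx, hy⟩, hadj⟩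
      · rintro (⟨⟨hx, hy⟩, hadj⟩ | ⟨a, ⟨ha, hadj⟩, he⟩)
        · exact ⟨⟨Or.inr hx, Or.inr hy⟩, hadj⟩
        · rw [Sym2.eq_iff] at he
          rcases he with ⟨rfl, rfl⟩ | ⟨rfl, rfl⟩
          · exact ⟨⟨Or.inl rfl, Or.inr ha⟩, hadj⟩
          · exact ⟨⟨Or.inr ha, Or.inl rfl⟩, hadj.symm⟩
  rw [hset, Finset.card_union_of_disjoint, Finset.card_image_of_injOn]
  · intro a ha b hb hab
    exact Sym2.congr_right.mp hab
  · rw [Finset.disjoint_left]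
    rintro e he hee
    obtain ⟨a, ha, rfl⟩ := Finset.mem_image.mp hee
    exact ht (mem_edgesWithin.mp he).1.1

lemma edge_unique_at_start :
    ∀ {v u : V} (p : G.Walk v u), p.IsPath →
      ∀ y z : V, s(y, v) ∈ p.edges → s(z, v) ∈ p.edges → y = z := by
  intro v u p
  induction p with
  | nil => intro _ y z hy _; simp at hy
  | cons hadj q ih =>
    rename_i a b c
    intro hp y z hy hz
    rw [SimpleGraph.Walk.edges_cons] at hy hz
    rw [SimpleGraph.Walk.cons_isPath_iff] at hp
    have key : ∀ w : V, s(w, a) ∈ (s(a, b) :: q.edges) → w = b := by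
      intro w hw
      rcases List.mem_cons.mp hw with hw | hw
      · rw [Sym2.eq_iff] at hw
        rcases hw with ⟨h1, h2⟩ | ⟨h1, h2⟩
        · exact h1.trans h2
        · exact h1
      · exact absurd (q.snd_mem_support_of_mem_edges hw) hp.2
    rw [key y hy, key z hz]

lemma edge_of_support_neighbor (hB : G.IsAcyclic) {v u y : V} {p : G.Walk v u}
    (hp : p.IsPath) (hadj : G.Adj v y) (hy : y ∈ p.support) : s(y, v) ∈ p.edges := by
  by_contra hne
  have hq : (p.takeUntil y hy).IsPath := hp.takeUntil hy
  have hcyc := SimpleGraph.Path.cons_isCycle ⟨p.takeUntil y hy, hq⟩ hadj.symm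
    (fun hmem => hne (p.edges_takeUntil_subset hy hmem))
  exact hB _ hcyc

lemma exists_long_path (hB : G.IsAcyclic) (T : Finset V)
    (hdeg : ∀ t ∈ T, 2 ≤ (T.filter (fun a => G.Adj t a)).card)
    (t0 : V) (ht0 : t0 ∈ T) (n : ℕ) :
    ∃ (v u : V) (p : G.Walk v u), p.IsPath ∧ (∀ x ∈ p.support, x ∈ T) ∧ p.length = n := by
  induction n with
  | zero =>
    exact ⟨t0, t0, SimpleGraph.Walk.nil, SimpleGraph.Walk.IsPath.nil,
      by simp [ht0], rfl⟩
  | succ n ih =>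
    obtain ⟨v, u, p, hp, hsupp, hlen⟩ := ih
    have hv : v ∈ T := hsupp v p.start_mem_support
    have hN := hdeg v hv
    have hex : ∃ y ∈ T.filter (fun a => G.Adj v a), y ∉ p.support := by
      by_contra hall
      push_neg at hall
      obtain ⟨a, ha, b, hb, hab⟩ := Finset.one_lt_card.mp hN
      have hadja := (Finset.mem_filter.mp ha).2
      have hadjb := (Finset.mem_filter.mp hb).2
      have ea := edge_of_support_neighbor hB hp hadja (hall a ha)
      have eb := edge_of_support_neighbor hB hp hadjb (hall b hb)
      exact hab (edge_unique_at_start p hp a b ea eb)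
    obtain ⟨y, hyN, hys⟩ := hex
    have hadj : G.Adj v y := (Finset.mem_filter.mp hyN).2
    refine ⟨y, u, SimpleGraph.Walk.cons hadj.symm p, ?_, ?_, ?_⟩
    · exact (SimpleGraph.Walk.cons_isPath_iff _ _).mpr ⟨hp, hys⟩
    · intro x hx
      rcases List.mem_cons.mp (by simpa using hx) with rfl | hx
      · exact (Finset.mem_filter.mp hyN).1
      · exact hsupp x hx
    · simp [hlen]

lemma no_min_degree_two (hB : G.IsAcyclic) (T : Finset V) (hne : T.Nonempty)
    (hdeg : ∀ t ∈ T, 2 ≤ (T.filter (fun a => G.Adj t a)).card) : False := by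
  obtain ⟨t0, ht0⟩ := hne
  obtain ⟨v, u, p, hp, hsupp, hlen⟩ := exists_long_path hB T hdeg t0 ht0 T.card
  have hsub : p.support.toFinset ⊆ T := fun x hx => hsupp x (List.mem_toFinset.mp hx)
  have hcard : p.support.toFinset.card = T.card + 1 := by
    rw [List.toFinset_card_of_nodup hp.support_nodup,
      SimpleGraph.Walk.length_support, hlen]
  have := Finset.card_le_card hsub
  omega

lemma forest_edges_lt (hB : G.IsAcyclic) :
    ∀ (T : Finset V), T.Nonempty → (edgesWithin G T).card < T.card := by
  intro T
  induction T using Finset.strongInduction with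
  | _ T ih =>
    intro hne
    by_cases hdeg : ∀ t ∈ T, 2 ≤ (T.filter (fun a => G.Adj t a)).card
    · exact (no_min_degree_two hB T hne hdeg).elim
    · push_neg at hdeg
      obtain ⟨t, ht, hd⟩ := hdeg
      have ht' : t ∉ T.erase t := Finset.notMem_erase t T
      have hins : insert t (T.erase t) = T := Finset.insert_erase ht
      have hE : (edgesWithin G T).card
          = (edgesWithin G (T.erase t)).card
            + ((T.erase t).filter (fun a => G.Adj t a)).card := by
        conv_lhs => rw [← hins]
        exact edgesWithin_insert ht'
      have hfe : ((T.erase t).filter (fun a => G.Adj t a)).card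
          ≤ (T.filter (fun a => G.Adj t a)).card :=
        Finset.card_le_card (Finset.filter_subset_filter _ (Finset.erase_subset t T))
      rcases Finset.eq_empty_or_nonempty (T.erase t) with hemp | hne'
      · have h0 : (edgesWithin G (T.erase t)).card = 0 := by
          rw [hemp]
          simp [edgesWithin]
        have hT1 : T.card = 1 := by
          have := Finset.card_erase_of_mem ht
          rw [hemp] at this
          simp at this
          have hpos := Finset.card_pos.mpr hne
          omega
        have : ((T.erase t).filter (fun a => G.Adj t a)).card = 0 := by
          rw [hemp]; simp
        omega
      · have hlt := ih (T.erase t) (Finset.erase_ssubset ht) hne'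
        have hc := Finset.card_erase_of_mem ht
        have hpos := Finset.card_pos.mpr hne
        omega

end Aux

/-- Let `B` be a finite acyclic simple graph (whose vertex set is `Finset.univ`) and
`A ⊊ B` such that `(A, B)` is a minimal pair.  Then `B \ A` is a single vertex `b`;
moreover if `δ(B/A) = 0` then `b` has exactly one neighbour in `A`, and if
`δ(B/A) < 0` then `b` has at least two neighbours in `A`. -/
theorem stmt_3 {V : Type*} [Fintype V] (B : SimpleGraph V) (hB : B.IsAcyclic)
    (A : Finset V) (hA : A ⊂ Finset.univ)
    (hmin₁ : ∀ C : Finset V, A ⊆ C → C ⊂ Finset.univ → ClosedIn B A C)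
    (hmin₂ : ¬ ClosedIn B A Finset.univ) :
    ∃ b : V, Finset.univ \ A = {b} ∧
      (delta B Finset.univ - delta B A = 0 →
        (A.filter (fun a => B.Adj b a)).card = 1) ∧
      (delta B Finset.univ - delta B A < 0 →
        2 ≤ (A.filter (fun a => B.Adj b a)).card) := by
  -- Step 1: from hmin₂ get D with delta D ≤ delta A
  unfold ClosedIn at hmin₂
  push_neg at hmin₂
  obtain ⟨D, hAD, hDu, hDA⟩ := hmin₂
  -- Step 2: D = univ
  have hDuniv : D = Finset.univ := by
    by_contra h
    have hss : D ⊂ Finset.univ := lt_of_le_of_ne hDu h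
    exact absurd (hmin₁ D hAD.subset hss D hAD (subset_refl D)) (not_lt.mpr hDA)
  subst hDuniv
  set T : Finset V := Finset.univ \ A with hT
  have hTne : T.Nonempty := by
    obtain ⟨x, _, hx⟩ := Finset.exists_of_ssubset hA
    exact ⟨x, Finset.mem_sdiff.mpr ⟨Finset.mem_univ x, hx⟩⟩
  have hTcard : 1 ≤ T.card := Finset.card_pos.mpr hTne
  -- T.card = 1
  have hT1 : T.card = 1 := by
    by_contra hT2
    have hT2 : 2 ≤ T.card := by omega
    -- every t ∈ T has no neighbours in A
    have hstep : ∀ t ∈ T, (A.filter (fun a => B.Adj t a)).card = 0 := by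
      intro t htT
      have htA : t ∉ A := (Finset.mem_sdiff.mp htT).2
      obtain ⟨t', ht', htt'⟩ := Finset.exists_mem_ne hT2 t
      have ht'A : t' ∉ A := (Finset.mem_sdiff.mp ht').2
      have hC : insert t A ⊂ Finset.univ := by
        refine Finset.ssubset_univ_iff.mpr (fun he => ?_)
        have : t' ∈ insert t A := he ▸ Finset.mem_univ t'
        rcases Finset.mem_insert.mp this with h | h
        · exact htt' h
        · exact ht'A h
      have hcl := hmin₁ (insert t A) (Finset.subset_insert t A) hC
      have h2 := hcl (insert t A) (Finset.ssubset_insert htA) (subset_refl _)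
      unfold delta at h2
      rw [Finset.card_insert_of_notMem htA, edgesWithin_insert htA] at h2
      push_cast at h2
      omega
    -- edges of univ split between A and T
    have hsplit : edgesWithin B Finset.univ ⊆ edgesWithin B A ∪ edgesWithin B T := by
      intro e he
      induction e using Sym2.ind with
      | _ x y =>
        have hadj : B.Adj x y := (mem_edgesWithin.mp he).2
        have hxy : ∀ z : V, z ∈ A ∨ z ∈ T := by
          intro z
          by_cases hz : z ∈ A
          · exact Or.inl hz
          · exact Or.inr (Finset.mem_sdiff.mpr ⟨Finset.mem_univ z, hz⟩)
        have hkey : ∀ a b : V, a ∈ A → b ∈ T → ¬ B.Adj a b := by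
          intro a b ha hb hadj'
          have h0 := hstep b hb
          have : a ∈ A.filter (fun a => B.Adj b a) :=
            Finset.mem_filter.mpr ⟨ha, hadj'.symm⟩
          rw [Finset.card_eq_zero.mp h0] at this
          simp at this
        rcases hxy x with hx | hx <;> rcases hxy y with hy | hy
        · exact Finset.mem_union_left _ (mem_edgesWithin.mpr ⟨⟨hx, hy⟩, hadj⟩)
        · exact absurd hadj (hkey x y hx hy)
        · exact absurd hadj.symm (hkey y x hy hx)
        · exact Finset.mem_union_right _ (mem_edgesWithin.mpr ⟨⟨hx, hy⟩, hadj⟩)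
    have hEle : (edgesWithin B Finset.univ).card
        ≤ (edgesWithin B A).card + (edgesWithin B T).card :=
      le_trans (Finset.card_le_card hsplit) (Finset.card_union_le _ _)
    have hforest : (edgesWithin B T).card < T.card := forest_edges_lt hB T hTne
    have hcards : T.card = (Finset.univ : Finset V).card - A.card := by
      rw [hT, Finset.card_sdiff_of_subset (Finset.subset_univ A)]
    have hAle : A.card ≤ (Finset.univ : Finset V).card := Finset.card_le_univ A
    unfold delta at hDA
    omega
  -- T = {b}
  obtain ⟨b, hb⟩ := Finset.card_eq_one.mp hT1
  have hbT : b ∈ T := hb ▸ Finset.mem_singleton_self b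
  have hbA : b ∉ A := (Finset.mem_sdiff.mp hbT).2
  have huniv : (Finset.univ : Finset V) = insert b A := by
    ext x
    simp only [Finset.mem_univ, Finset.mem_insert, true_iff]
    by_cases hx : x ∈ A
    · exact Or.inr hx
    · left
      have : x ∈ T := Finset.mem_sdiff.mpr ⟨Finset.mem_univ x, hx⟩
      rw [hb] at this
      exact Finset.mem_singleton.mp this
  have hdelta : delta B Finset.univ - delta B A
      = 1 - ((A.filter (fun a => B.Adj b a)).card : ℤ) := by
    unfold delta
    rw [huniv, Finset.card_insert_of_notMem hbA, edgesWithin_insert hbA]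
    push_cast
    ring
  refine ⟨b, hb, ?_, ?_⟩
  · intro h0
    rw [hdelta] at h0
    omega
  · intro h0
    rw [hdelta] at h0
    omega
end

section
/- Let N be a (possibly infinite) acyclic simple graph and A a finite set of vertices of N. Then A is closed in N (that is, A ≤* B holds for every finite vertex set B of N with A ⊆ B) if and only if no vertex of N outside A is adjacent to a vertex of A. -/
open scoped Classical

lemma mem_edgesWithin_iff {V : Type*} (G : SimpleGraph V) (S : Finset V) (a b : V) :
    s(a, b) ∈ edgesWithin G S ↔ (a ∈ S ∧ b ∈ S) ∧ G.Adj a b := by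
  simp [edgesWithin, Finset.mk_mem_sym2_iff]

/-- In an acyclic graph, every nonempty finite set contains a vertex with at most one
neighbour inside the set. -/
lemma exists_nearleaf {V : Type*} (G : SimpleGraph V) (hG : G.IsAcyclic) (S : Finset V)
    (hS : S.Nonempty) :
    ∃ u ∈ S, ∀ w₁ ∈ S, ∀ w₂ ∈ S, G.Adj u w₁ → G.Adj u w₂ → w₁ = w₂ := by
  classical
  set P : ℕ → Prop := fun n => ∃ (u v : V) (p : G.Walk u v), p.IsPath ∧
      (∀ x ∈ p.support, x ∈ S) ∧ p.length = n with hP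
  obtain ⟨s, hs⟩ := hS
  have hP0 : P 0 := ⟨s, s, SimpleGraph.Walk.nil, SimpleGraph.Walk.IsPath.nil,
    by simp [hs], rfl⟩
  have hbound : ∀ n, P n → n < S.card := by
    rintro n ⟨u, v, p, hp, hsup, hlen⟩
    have h1 : p.support.toFinset ⊆ S := fun x hx => hsup x (List.mem_toFinset.mp hx)
    have h2 : p.support.toFinset.card = n + 1 := by
      rw [List.toFinset_card_of_nodup hp.support_nodup, SimpleGraph.Walk.length_support, hlen]
    have := Finset.card_le_card h1
    omega
  set n := Nat.findGreatest P S.card with hn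
  have hPn : P n := Nat.findGreatest_spec (Nat.zero_le _) hP0
  have hmax : ∀ k, P k → k ≤ n := fun k hk =>
    Nat.le_findGreatest (le_of_lt (hbound k hk)) hk
  obtain ⟨u, v, p, hp, hsup, hlen⟩ := hPn
  refine ⟨u, hsup u p.start_mem_support, ?_⟩
  -- every S-neighbour of u lies on p
  have hmemsup : ∀ w ∈ S, G.Adj u w → w ∈ p.support := by
    intro w hw hadj
    by_contra hws
    have hpath : (SimpleGraph.Walk.cons hadj.symm p).IsPath :=
      (SimpleGraph.Walk.cons_isPath_iff _ _).mpr ⟨hp, hws⟩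
    have : P (n + 1) := by
      refine ⟨w, v, SimpleGraph.Walk.cons hadj.symm p, hpath, ?_, by simp [hlen]⟩
      intro x hx
      rw [SimpleGraph.Walk.support_cons, List.mem_cons] at hx
      rcases hx with rfl | hx
      · exact hw
      · exact hsup x hx
    have := hmax _ this
    omega
  -- the edge to every S-neighbour of u lies on p
  have hedge : ∀ w ∈ S, G.Adj u w → s(u, w) ∈ p.edges := by
    intro w hw hadj
    have hwsup := hmemsup w hw hadj
    by_contra hne
    set q := p.takeUntil w hwsup with hq
    have hqp : q.IsPath := hp.takeUntil hwsup
    have hqe : s(w, u) ∉ q.edges := by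
      intro hmem
      exact hne (by
        have := SimpleGraph.Walk.edges_takeUntil_subset p hwsup hmem
        rwa [Sym2.eq_swap] at this)
    have : (SimpleGraph.Walk.cons hadj.symm q).IsCycle :=
      (SimpleGraph.Walk.cons_isCycle_iff q hadj.symm).mpr ⟨hqp, hqe⟩
    exact hG _ this
  -- an edge of the path p starting at its first vertex determines its other endpoint
  have huniq : ∀ w₁ w₂, s(u, w₁) ∈ p.edges → s(u, w₂) ∈ p.edges → w₁ = w₂ := by
    cases p with
    | nil => intro w₁ w₂ h₁ _; simp at h₁
    | @cons _ x _ h' p' =>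
      have hp' := (SimpleGraph.Walk.cons_isPath_iff _ _).mp hp
      intro w₁ w₂ h₁ h₂
      rw [SimpleGraph.Walk.edges_cons, List.mem_cons] at h₁ h₂
      have key : ∀ w, s(u, w) = s(u, x) ∨ s(u, w) ∈ p'.edges → w = x := by
        rintro w (h | h)
        · exact Sym2.congr_right.mp h
        · exact absurd (SimpleGraph.Walk.fst_mem_support_of_mem_edges p' h) hp'.2
      rw [key w₁ h₁, key w₂ h₂]
  intro w₁ hw₁ w₂ hw₂ h₁ h₂
  exact huniq w₁ w₂ (hedge _ hw₁ h₁) (hedge _ hw₂ h₂)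

/-- In an acyclic graph, a nonempty finite set spans fewer edges than vertices. -/
lemma edgesWithin_card_lt {V : Type*} (G : SimpleGraph V) (hG : G.IsAcyclic) :
    ∀ S : Finset V, S.Nonempty → (edgesWithin G S).card < S.card := by
  classical
  intro S
  induction S using Finset.strongInduction with
  | _ S ih =>
    intro hS
    obtain ⟨u, hu, huniq⟩ := exists_nearleaf G hG S hS
    set S' := S.erase u with hS'
    have hsub : edgesWithin G S ⊆
        edgesWithin G S' ∪ (S.filter (G.Adj u)).image (fun w => s(u, w)) := by
      intro e he
      induction e using Sym2.ind with
      | _ a b =>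
        rw [mem_edgesWithin_iff] at he
        obtain ⟨⟨ha, hb⟩, hadj⟩ := he
        by_cases hau : a = u
        · subst hau
          exact Finset.mem_union_right _ (Finset.mem_image.mpr
            ⟨b, Finset.mem_filter.mpr ⟨hb, hadj⟩, rfl⟩)
        by_cases hbu : b = u
        · subst hbu
          refine Finset.mem_union_right _ (Finset.mem_image.mpr
            ⟨a, Finset.mem_filter.mpr ⟨ha, hadj.symm⟩, Sym2.eq_swap⟩)
        · exact Finset.mem_union_left _ ((mem_edgesWithin_iff G S' a b).mpr
            ⟨⟨Finset.mem_erase.mpr ⟨hau, ha⟩, Finset.mem_erase.mpr ⟨hbu, hb⟩⟩, hadj⟩)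
    have hcard : (edgesWithin G S).card ≤
        (edgesWithin G S').card + (S.filter (G.Adj u)).card :=
      le_trans (Finset.card_le_card hsub)
        (le_trans (Finset.card_union_le _ _)
          (by gcongr; exact Finset.card_image_le))
    have hfilt : (S.filter (G.Adj u)).card ≤ 1 := by
      apply Finset.card_le_one.mpr
      intro a ha b hb
      rw [Finset.mem_filter] at ha hb
      exact huniq a ha.1 b hb.1 ha.2 hb.2
    by_cases hS'ne : S'.Nonempty
    · have h1 := ih S' (Finset.erase_ssubset hu) hS'ne
      have h2 : S'.card < S.card := Finset.card_erase_lt_of_mem hu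
      omega
    · rw [Finset.not_nonempty_iff_eq_empty] at hS'ne
      have hSsing : S = {u} := by
        apply Finset.eq_singleton_iff_unique_mem.mpr
        refine ⟨hu, fun x hx => ?_⟩
        by_contra hxu
        have : x ∈ S' := Finset.mem_erase.mpr ⟨hxu, hx⟩
        rw [hS'ne] at this
        exact absurd this (Finset.notMem_empty x)
      have hfe : S.filter (G.Adj u) = ∅ := by
        subst hSsing
        simp [Finset.filter_singleton]
      have hSe : edgesWithin G S' = ∅ := by
        rw [hS'ne]
        rfl
      rw [hfe, hSe, Finset.card_empty, Finset.card_empty] at hcard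
      rw [hSsing] at hcard ⊢
      simp only [Finset.card_singleton]
      omega

/-- Let `N` be a (possibly infinite) acyclic simple graph and `A` a finite set of its
vertices.  Then `A` is closed in `N` (i.e. `A ≤* B` for every finite `B ⊇ A`) iff no
vertex of `N` outside `A` is adjacent to a vertex of `A`. -/
theorem stmt_5 {V : Type*} (N : SimpleGraph V) (hN : N.IsAcyclic) (A : Finset V) :
    (∀ B : Finset V, A ⊆ B →
        ∀ C : Finset V, A ⊂ C → C ⊆ B → delta N A < delta N C) ↔
      (∀ v : V, v ∉ A → ∀ a ∈ A, ¬ N.Adj v a) := by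
  classical
  constructor
  · intro h v hv a ha hadj
    have hlt := h (insert v A) (Finset.subset_insert _ _) (insert v A)
      (Finset.ssubset_insert hv) (le_refl _)
    -- show delta N (insert v A) ≤ delta N A, contradiction
    have hsub : insert s(v, a) (edgesWithin N A) ⊆ edgesWithin N (insert v A) := by
      intro e he
      rw [Finset.mem_insert] at he
      rcases he with rfl | he
      · exact (mem_edgesWithin_iff _ _ _ _).mpr
          ⟨⟨Finset.mem_insert_self _ _, Finset.mem_insert_of_mem ha⟩, hadj⟩
      · induction e using Sym2.ind with
        | _ x y =>
          rw [mem_edgesWithin_iff] at he ⊢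
          exact ⟨⟨Finset.mem_insert_of_mem he.1.1, Finset.mem_insert_of_mem he.1.2⟩, he.2⟩
    have hnotmem : s(v, a) ∉ edgesWithin N A := by
      rw [mem_edgesWithin_iff]
      tauto
    have hecard : (edgesWithin N A).card + 1 ≤ (edgesWithin N (insert v A)).card := by
      have := Finset.card_le_card hsub
      rwa [Finset.card_insert_of_notMem hnotmem] at this
    have hvcard : (insert v A).card = A.card + 1 := Finset.card_insert_of_notMem hv
    unfold delta at hlt
    rw [hvcard] at hlt
    push_cast at hlt
    omega
  · intro h B hAB C hAC hCB
    have hCA : (C \ A).Nonempty := by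
      obtain ⟨x, hxC, hxA⟩ := Finset.exists_of_ssubset hAC
      exact ⟨x, Finset.mem_sdiff.mpr ⟨hxC, hxA⟩⟩
    have hsplit : edgesWithin N C = edgesWithin N A ∪ edgesWithin N (C \ A) := by
      ext e
      induction e using Sym2.ind with
      | _ x y =>
        simp only [Finset.mem_union, mem_edgesWithin_iff]
        constructor
        · rintro ⟨⟨hx, hy⟩, hadj⟩
          by_cases hxA : x ∈ A
          · by_cases hyA : y ∈ A
            · exact Or.inl ⟨⟨hxA, hyA⟩, hadj⟩
            · exact absurd hadj.symm (h y hyA x hxA)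
          · by_cases hyA : y ∈ A
            · exact absurd hadj (h x hxA y hyA)
            · exact Or.inr ⟨⟨Finset.mem_sdiff.mpr ⟨hx, hxA⟩,
                Finset.mem_sdiff.mpr ⟨hy, hyA⟩⟩, hadj⟩
        · rintro (⟨⟨hx, hy⟩, hadj⟩ | ⟨⟨hx, hy⟩, hadj⟩)
          · exact ⟨⟨hAC.subset hx, hAC.subset hy⟩, hadj⟩
          · exact ⟨⟨(Finset.mem_sdiff.mp hx).1, (Finset.mem_sdiff.mp hy).1⟩, hadj⟩
    have hdisj : Disjoint (edgesWithin N A) (edgesWithin N (C \ A)) := by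
      rw [Finset.disjoint_left]
      intro e he he'
      induction e using Sym2.ind with
      | _ x y =>
        rw [mem_edgesWithin_iff] at he he'
        exact (Finset.mem_sdiff.mp he'.1.1).2 he.1.1
    have hcard : (edgesWithin N C).card =
        (edgesWithin N A).card + (edgesWithin N (C \ A)).card := by
      rw [hsplit, Finset.card_union_of_disjoint hdisj]
    have hforest : (edgesWithin N (C \ A)).card < (C \ A).card :=
      edgesWithin_card_lt N hN _ hCA
    have hCcard : C.card = A.card + (C \ A).card := by
      rw [Finset.card_sdiff_of_subset hAC.subset]
      have := Finset.card_le_card hAC.subset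
      omega
    unfold delta
    rw [hcard, hCcard]
    push_cast
    omega
end

section
/- Full amalgamation for 3-uniform hypergraphs: let B₁ and B₂ be finite 3-uniform hypergraphs in the class K₀⁺ whose vertex sets intersect in V₀ and which induce the same hypergraph B₀ on V₀, and suppose B₀ ≤* B₁ (V₀ is closed in B₁). Let D be the free join: the hypergraph with vertex set V₁ ∪ V₂ and hyperedge set E₁ ∪ E₂. Then D belongs to K₀⁺ and the vertex set of B₂ is closed in D, i.e. B₂ ≤* D. -/
/-- The predimension of the finite vertex set `S` with respect to the hyperedge set `E`:
`δ(S) = |S| - |{e ∈ E : e ⊆ S}|`. -/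
def hdelta {α : Type*} [DecidableEq α] (E : Finset (Finset α)) (S : Finset α) : ℤ :=
  (S.card : ℤ) - ((E.filter (fun e => e ⊆ S)).card : ℤ)

lemma hdelta_submodular {α : Type*} [DecidableEq α] (E : Finset (Finset α)) (A B : Finset α) :
    hdelta E (A ∪ B) + hdelta E (A ∩ B) ≤ hdelta E A + hdelta E B := by
  have hc : (A ∪ B).card + (A ∩ B).card = A.card + B.card :=
    Finset.card_union_add_card_inter A B
  have hsub : (E.filter (fun e => e ⊆ A)) ∪ (E.filter (fun e => e ⊆ B)) ⊆
      E.filter (fun e => e ⊆ A ∪ B) := by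
    intro e he
    simp only [Finset.mem_union, Finset.mem_filter] at he ⊢
    rcases he with ⟨h1, h2⟩ | ⟨h1, h2⟩
    · exact ⟨h1, h2.trans Finset.subset_union_left⟩
    · exact ⟨h1, h2.trans Finset.subset_union_right⟩
  have hint : (E.filter (fun e => e ⊆ A)) ∩ (E.filter (fun e => e ⊆ B)) =
      E.filter (fun e => e ⊆ A ∩ B) := by
    ext e
    simp only [Finset.mem_inter, Finset.mem_filter, Finset.subset_inter_iff]
    tauto
  have h1 := Finset.card_union_add_card_inter (E.filter (fun e => e ⊆ A))
    (E.filter (fun e => e ⊆ B))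
  rw [hint] at h1
  have h2 := Finset.card_le_card hsub
  unfold hdelta
  omega

lemma hdelta_empty {α : Type*} [DecidableEq α] (E : Finset (Finset α))
    (hE : ∀ e ∈ E, e.card = 3) : hdelta E (∅ : Finset α) = 0 := by
  have : E.filter (fun e => e ⊆ (∅ : Finset α)) = ∅ := by
    apply Finset.filter_eq_empty_iff.mpr
    intro e he h
    have h0 : e = ∅ := Finset.subset_empty.mp h
    have h3 := hE e he
    rw [h0] at h3
    simp at h3
  unfold hdelta
  rw [this]
  simp

lemma hdelta_decomp {α : Type*} [DecidableEq α]
    (V₁ V₂ : Finset α) (E₁ E₂ : Finset (Finset α))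
    (h₁ : ∀ e ∈ E₁, e ⊆ V₁) (h₂ : ∀ e ∈ E₂, e ⊆ V₂)
    (hsame : E₁.filter (fun e => e ⊆ V₁ ∩ V₂) = E₂.filter (fun e => e ⊆ V₁ ∩ V₂))
    (S : Finset α) (hS : S ⊆ V₁ ∪ V₂) :
    hdelta (E₁ ∪ E₂) S =
      hdelta E₁ (S ∩ V₁) + hdelta E₂ (S ∩ V₂) - hdelta E₁ (S ∩ (V₁ ∩ V₂)) := by
  have e1 : E₁.filter (fun e => e ⊆ S) = E₁.filter (fun e => e ⊆ S ∩ V₁) := by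
    apply Finset.filter_congr
    intro e he
    simp only [Finset.subset_inter_iff]
    exact ⟨fun h => ⟨h, h₁ e he⟩, fun h => h.1⟩
  have e2 : E₂.filter (fun e => e ⊆ S) = E₂.filter (fun e => e ⊆ S ∩ V₂) := by
    apply Finset.filter_congr
    intro e he
    simp only [Finset.subset_inter_iff]
    exact ⟨fun h => ⟨h, h₂ e he⟩, fun h => h.1⟩
  have eint : (E₁.filter (fun e => e ⊆ S)) ∩ (E₂.filter (fun e => e ⊆ S)) =
      E₁.filter (fun e => e ⊆ S ∩ (V₁ ∩ V₂)) := by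
    ext e
    simp only [Finset.mem_inter, Finset.mem_filter, Finset.subset_inter_iff]
    constructor
    · rintro ⟨⟨he₁, hs⟩, ⟨he₂, _⟩⟩
      exact ⟨he₁, hs, h₁ e he₁, h₂ e he₂⟩
    · rintro ⟨he₁, hs, hv₁, hv₂⟩
      have he₂ : e ∈ E₂ := by
        have hm : e ∈ E₂.filter (fun e => e ⊆ V₁ ∩ V₂) := by
          rw [← hsame]
          exact Finset.mem_filter.mpr ⟨he₁, Finset.subset_inter hv₁ hv₂⟩
        exact (Finset.mem_filter.mp hm).1
      exact ⟨⟨he₁, hs⟩, ⟨he₂, hs⟩⟩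
  have hfu : (E₁ ∪ E₂).filter (fun e => e ⊆ S) =
      E₁.filter (fun e => e ⊆ S) ∪ E₂.filter (fun e => e ⊆ S) :=
    Finset.filter_union _ _ _
  have hcard : ((E₁ ∪ E₂).filter (fun e => e ⊆ S)).card +
      (E₁.filter (fun e => e ⊆ S ∩ (V₁ ∩ V₂))).card =
      (E₁.filter (fun e => e ⊆ S ∩ V₁)).card + (E₂.filter (fun e => e ⊆ S ∩ V₂)).card := by
    rw [hfu, ← e1, ← e2, ← eint]
    exact Finset.card_union_add_card_inter _ _
  have cS : S.card + (S ∩ (V₁ ∩ V₂)).card = (S ∩ V₁).card + (S ∩ V₂).card := by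
    have hu : (S ∩ V₁) ∪ (S ∩ V₂) = S := by
      rw [← Finset.inter_union_distrib_left]
      exact Finset.inter_eq_left.mpr hS
    have hi : (S ∩ V₁) ∩ (S ∩ V₂) = S ∩ (V₁ ∩ V₂) := by
      ext x
      simp only [Finset.mem_inter]
      tauto
    have h := Finset.card_union_add_card_inter (S ∩ V₁) (S ∩ V₂)
    rw [hu, hi] at h
    omega
  unfold hdelta
  omega

/-- Full amalgamation for finite 3-uniform hypergraphs in the class `K₀⁺`:
if `B₁ = (V₁, E₁)` and `B₂ = (V₂, E₂)` are in `K₀⁺`, induce the same hypergraph on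
`V₀ = V₁ ∩ V₂`, and `V₀` is closed in `B₁`, then the free join
`D = (V₁ ∪ V₂, E₁ ∪ E₂)` is in `K₀⁺` and `V₂` is closed in `D`. -/
theorem stmt_6 {α : Type*} [DecidableEq α]
    (V₁ V₂ : Finset α) (E₁ E₂ : Finset (Finset α))
    (hE₁ : ∀ e ∈ E₁, e.card = 3 ∧ e ⊆ V₁)
    (hE₂ : ∀ e ∈ E₂, e.card = 3 ∧ e ⊆ V₂)
    (hK₁ : ∀ S ⊆ V₁, S.Nonempty → 0 < hdelta E₁ S)
    (hK₂ : ∀ S ⊆ V₂, S.Nonempty → 0 < hdelta E₂ S)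
    (hsame : E₁.filter (fun e => e ⊆ V₁ ∩ V₂) = E₂.filter (fun e => e ⊆ V₁ ∩ V₂))
    (hclosed : ∀ C : Finset α, V₁ ∩ V₂ ⊂ C → C ⊆ V₁ →
        hdelta E₁ (V₁ ∩ V₂) < hdelta E₁ C) :
    (∀ S ⊆ V₁ ∪ V₂, S.Nonempty → 0 < hdelta (E₁ ∪ E₂) S) ∧
    (∀ C : Finset α, V₂ ⊂ C → C ⊆ V₁ ∪ V₂ →
        hdelta (E₁ ∪ E₂) V₂ < hdelta (E₁ ∪ E₂) C) := by
  have h₁ : ∀ e ∈ E₁, e ⊆ V₁ := fun e he => (hE₁ e he).2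
  have h₂ : ∀ e ∈ E₂, e ⊆ V₂ := fun e he => (hE₂ e he).2
  -- closedness extended to all subsets of V₁
  have closed' : ∀ S₁ ⊆ V₁, hdelta E₁ (S₁ ∩ (V₁ ∩ V₂)) ≤ hdelta E₁ S₁ := by
    intro S₁ hS₁
    have hsubm := hdelta_submodular E₁ S₁ (V₁ ∩ V₂)
    have hle : hdelta E₁ (V₁ ∩ V₂) ≤ hdelta E₁ (S₁ ∪ (V₁ ∩ V₂)) := by
      by_cases h : S₁ ∪ (V₁ ∩ V₂) ⊆ V₁ ∩ V₂
      · have heq : S₁ ∪ (V₁ ∩ V₂) = V₁ ∩ V₂ :=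
          subset_antisymm h Finset.subset_union_right
        rw [heq]
      · refine le_of_lt (hclosed _ ?_ ?_)
        · exact Finset.ssubset_def.mpr ⟨Finset.subset_union_right, h⟩
        · exact Finset.union_subset hS₁ Finset.inter_subset_left
    linarith
  constructor
  · intro S hS hSne
    have hd := hdelta_decomp V₁ V₂ E₁ E₂ h₁ h₂ hsame S hS
    have hle := closed' (S ∩ V₁) Finset.inter_subset_right
    have heq : (S ∩ V₁) ∩ (V₁ ∩ V₂) = S ∩ (V₁ ∩ V₂) := by
      ext x
      simp only [Finset.mem_inter]
      tauto
    rw [heq] at hle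
    by_cases h2 : (S ∩ V₂).Nonempty
    · have := hK₂ _ Finset.inter_subset_right h2
      linarith
    · have hS₂ : S ∩ V₂ = ∅ := Finset.not_nonempty_iff_eq_empty.mp h2
      have hS₀ : S ∩ (V₁ ∩ V₂) = ∅ := by
        apply Finset.subset_empty.mp
        rw [← hS₂]
        intro x hx
        simp only [Finset.mem_inter] at hx ⊢
        exact ⟨hx.1, hx.2.2⟩
      have hSV₁ : S ⊆ V₁ := by
        intro x hx
        rcases Finset.mem_union.mp (hS hx) with h | h
        · exact h
        · exact absurd (Finset.mem_inter.mpr ⟨hx, h⟩) (by rw [hS₂]; simp)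
      have hpos := hK₁ S hSV₁ hSne
      have hSV : S ∩ V₁ = S := Finset.inter_eq_left.mpr hSV₁
      rw [hS₂, hS₀, hSV, hdelta_empty E₂ (fun e he => (hE₂ e he).1),
        hdelta_empty E₁ (fun e he => (hE₁ e he).1)] at hd
      linarith
  · intro C hC hCsub
    have hdV := hdelta_decomp V₁ V₂ E₁ E₂ h₁ h₂ hsame V₂ Finset.subset_union_right
    have hdC := hdelta_decomp V₁ V₂ E₁ E₂ h₁ h₂ hsame C hCsub
    have e1 : V₂ ∩ V₁ = V₁ ∩ V₂ := Finset.inter_comm _ _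
    have e2 : V₂ ∩ (V₁ ∩ V₂) = V₁ ∩ V₂ := by
      ext x; simp only [Finset.mem_inter]; tauto
    have e3 : V₂ ∩ V₂ = V₂ := Finset.inter_self _
    have e4 : C ∩ V₂ = V₂ := Finset.inter_eq_right.mpr hC.subset
    have e5 : C ∩ (V₁ ∩ V₂) = V₁ ∩ V₂ := by
      apply Finset.inter_eq_right.mpr
      exact (Finset.inter_subset_right).trans hC.subset
    rw [e1, e2, e3] at hdV
    rw [e4, e5] at hdC
    obtain ⟨x, hxC, hxV₂⟩ := Finset.exists_of_ssubset hC
    have hxV₁ : x ∈ V₁ := by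
      rcases Finset.mem_union.mp (hCsub hxC) with h | h
      · exact h
      · exact absurd h hxV₂
    have hss : V₁ ∩ V₂ ⊂ C ∩ V₁ := by
      apply Finset.ssubset_def.mpr
      constructor
      · intro y hy
        simp only [Finset.mem_inter] at hy ⊢
        exact ⟨hC.subset hy.2, hy.1⟩
      · intro h
        have := h (Finset.mem_inter.mpr ⟨hxC, hxV₁⟩)
        exact hxV₂ (Finset.mem_inter.mp this).2
    have := hclosed (C ∩ V₁) hss Finset.inter_subset_right
    linarith
end

section
/- Let N be an acyclic simple graph such that every finite acyclic graph F admits a closed embedding into N, i.e. an injective map into the vertices of N preserving adjacency and non-adjacency whose image has no vertex of N outside it adjacent to it. Then N is *-homogeneous: for every finite set A of vertices of N such that no vertex of N outside A is adjacent to A, and every finite acyclic graph B containing A as an induced subgraph with no edge of B between A and B \ A, there is an embedding of B into N which is the identity on A and whose image has no vertex of N outside it adjacent to it. -/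
/-!
Realise `|A| + 1` disjoint copies of `B` as the acyclic graph `⊥ □ B` and embed it closedly
into `N`. Distinct copies are disjoint, so by pigeonhole one copy misses `A`, and a single copy
is still closed in `N` because no edges run between copies. Keep `A` in place and send the rest
of `B` into that copy: as `A` is closed in `N` and `B` has no edges between `A` and `B \ A`,
the glued map is again a closed embedding.
-/

open Function SimpleGraph

namespace SimpleGraph

variable {ι α β V : Type*}

def IsClosedSet (G : SimpleGraph V) (s : Set V) : Prop :=
  ∀ v ∉ s, ∀ c ∈ s, ¬ G.Adj v c

theorem Preconnected.isContained_of_isContained_bot_boxProd {H : SimpleGraph α}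
    {B : SimpleGraph β} (hH : H.Preconnected) (h : H ⊑ (⊥ : SimpleGraph ι) □ B) :
    H ⊑ B := by
  obtain ⟨f⟩ := h
  have fst_eq : ∀ x y, (f x).1 = (f y).1 := fun x y =>
    reachable_bot.1 (reachable_boxProd.1 ((hH x y).map f.toHom)).1
  refine ⟨⟨⟨fun x => (f x).2, fun hxy => ?_⟩,
    fun x y hxy => f.injective (Prod.ext (fst_eq x y) hxy)⟩⟩
  have hadj := f.toHom.map_adj hxy
  simp only [boxProd_adj, bot_adj, false_and, false_or] at hadj
  exact hadj.1

theorem IsAcyclic.bot_boxProd {B : SimpleGraph β} (hB : B.IsAcyclic) :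
    ((⊥ : SimpleGraph ι) □ B).IsAcyclic :=
  isAcyclic_iff_free_cycleGraph.2 fun n hn h =>
    isAcyclic_iff_free_cycleGraph.1 hB n hn
      (cycleGraph_preconnected.isContained_of_isContained_bot_boxProd h)

theorem isClosedSet_range_boxProdRight_bot (B : SimpleGraph β) (i : ι) :
    ((⊥ : SimpleGraph ι) □ B).IsClosedSet (Set.range (boxProdRight ⊥ B i)) := by
  rintro ⟨j, u⟩ hv _ ⟨w, rfl⟩ hadj
  obtain ⟨-, rfl⟩ : B.Adj u w ∧ j = i := by simpa [boxProd_adj] using hadj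
  exact hv ⟨u, rfl⟩

theorem IsClosedSet.image_embedding {G : SimpleGraph α} {N : SimpleGraph V} {φ : G ↪g N}
    (hφ : N.IsClosedSet (Set.range φ)) {s : Set α} (hs : G.IsClosedSet s) :
    N.IsClosedSet (φ '' s) := by
  rintro v hv _ ⟨c, hc, rfl⟩ hadj
  obtain ⟨x, rfl⟩ : v ∈ Set.range φ := by
    by_contra hx
    exact hφ _ hx _ ⟨c, rfl⟩ hadj
  exact hs x (fun hx => hv ⟨x, hx, rfl⟩) c hc (φ.map_rel_iff.1 hadj)

theorem exists_fiber_notMem_finset {f : ι × β → V} (hf : Injective f) [Fintype ι]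
    (A : Finset V) (hA : A.card < Fintype.card ι) : ∃ i, ∀ b, f (i, b) ∉ A := by
  by_contra! hcover
  choose b hb using hcover
  obtain ⟨i, -, j, -, hij, hfij⟩ := Finset.exists_ne_map_eq_of_card_lt_of_maps_to
    (s := Finset.univ) (t := A) hA (fun i _ => hb i)
  exact hij (congrArg Prod.fst (hf hfij))

theorem exists_embedding_extend_of_isClosedSet {N : SimpleGraph V} {B : SimpleGraph β}
    {A : Set V} (hA : N.IsClosedSet A) {g : A → β} (hg : Injective g)
    (hgiso : ∀ a b : A, N.Adj a b ↔ B.Adj (g a) (g b))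
    (hgcl : ∀ (a : A) (w : β), w ∉ Set.range g → ¬ B.Adj (g a) w)
    (ψ : B ↪g N) (hψ : N.IsClosedSet (Set.range ψ)) (hψA : ∀ w, ψ w ∉ A) :
    ∃ φ : B ↪g N, N.IsClosedSet (Set.range φ) ∧ ∀ a, φ (g a) = a := by
  set f := extend g Subtype.val ψ
  have hfg : ∀ a, f (g a) = a := hg.extend_apply _ _
  have mem_range_or : ∀ w, (∃ a, g a = w) ∨ (f w = ψ w ∧ w ∉ Set.range g) := fun w =>
    (em _).imp_right fun hw => ⟨extend_apply' _ _ _ hw, hw⟩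
  have hf_inj : Injective f := by
    intro w w' h
    rcases mem_range_or w with ⟨a, rfl⟩ | ⟨hw, -⟩ <;>
      rcases mem_range_or w' with ⟨b, rfl⟩ | ⟨hw', -⟩
    · rw [hfg, hfg] at h
      rw [Subtype.ext h]
    · exact absurd (h ▸ hfg a ▸ a.2) (hw' ▸ hψA w')
    · exact absurd (h ▸ hfg b ▸ b.2) (hw ▸ hψA w)
    · exact ψ.injective (hw ▸ hw' ▸ h)
  have hf_adj : ∀ {w w'}, N.Adj (f w) (f w') ↔ B.Adj w w' := by
    intro w w'
    rcases mem_range_or w with ⟨a, rfl⟩ | ⟨hw, hwg⟩ <;>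
      rcases mem_range_or w' with ⟨b, rfl⟩ | ⟨hw', hw'g⟩
    · rw [hfg, hfg, hgiso]
    · refine iff_of_false (fun h => hA _ (hw' ▸ hψA w') a a.2 ?_) (hgcl a w' hw'g)
      exact hfg a ▸ h.symm
    · refine iff_of_false (fun h => hA _ (hw ▸ hψA w) b b.2 ?_) (fun h => hgcl b w hwg h.symm)
      exact hfg b ▸ h
    · rw [hw, hw', ψ.map_rel_iff]
  refine ⟨⟨⟨f, hf_inj⟩, hf_adj⟩, ?_, hfg⟩
  rintro v hv _ ⟨w, rfl⟩ hadj
  rcases mem_range_or w with ⟨a, rfl⟩ | ⟨hw, hwg⟩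
  · have hvA : v ∉ A := fun hvA => hv ⟨g ⟨v, hvA⟩, hfg _⟩
    exact hA v hvA a a.2 (hfg a ▸ hadj)
  · obtain ⟨u, rfl⟩ : v ∈ Set.range ψ := by
      by_contra hvψ
      exact hψ _ hvψ _ ⟨w, rfl⟩ (hw ▸ hadj)
    have huw : B.Adj u w := ψ.map_rel_iff.1 (hw ▸ hadj)
    rcases mem_range_or u with ⟨a, rfl⟩ | ⟨hu, -⟩
    · exact hgcl a w hwg huw
    · exact hv ⟨u, hu⟩

theorem exists_embedding_isClosedSet_range_of_fin {N : SimpleGraph V}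
    (huniv : ∀ (n : ℕ) (F : SimpleGraph (Fin n)), F.IsAcyclic →
      ∃ φ : F ↪g N, N.IsClosedSet (Set.range φ))
    [Finite α] {F : SimpleGraph α} (hF : F.IsAcyclic) :
    ∃ φ : F ↪g N, N.IsClosedSet (Set.range φ) := by
  let e := Iso.map (Finite.equivFin α) F
  obtain ⟨φ, hφ⟩ := huniv _ _ (e.isAcyclic_iff.1 hF)
  refine ⟨e.toEmbedding.trans φ, ?_⟩
  convert hφ using 1
  exact e.surjective.range_comp _

end SimpleGraph

theorem stmt_12_general {V : Type*} (N : SimpleGraph V)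
    (huniv : ∀ (n : ℕ) (F : SimpleGraph (Fin n)), F.IsAcyclic →
      ∃ f : Fin n → V, Function.Injective f ∧
        (∀ a b : Fin n, F.Adj a b ↔ N.Adj (f a) (f b)) ∧
        (∀ v : V, v ∉ Set.range f → ∀ a : Fin n, ¬ N.Adj v (f a))) :
    ∀ (A : Finset V),
      -- A is closed in N
      (∀ v : V, v ∉ A → ∀ a ∈ A, ¬ N.Adj v a) →
      ∀ (n : ℕ) (B : SimpleGraph (Fin n)), B.IsAcyclic →
        ∀ g : {a : V // a ∈ A} → Fin n, Function.Injective g →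
          -- B contains A as an induced subgraph (via g) ...
          (∀ a b : {a : V // a ∈ A}, N.Adj a.1 b.1 ↔ B.Adj (g a) (g b)) →
          -- ... with no edge of B between A and B \ A
          (∀ (a : {a : V // a ∈ A}) (w : Fin n), w ∉ Set.range g → ¬ B.Adj (g a) w) →
          -- then B closedly embeds into N over A:
          ∃ f : Fin n → V, Function.Injective f ∧
            (∀ w w' : Fin n, B.Adj w w' ↔ N.Adj (f w) (f w')) ∧
            (∀ a : {a : V // a ∈ A}, f (g a) = a.1) ∧
            (∀ v : V, v ∉ Set.range f → ∀ w : Fin n, ¬ N.Adj v (f w)) := by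
  intro A hA n B hB g hg hgiso hgcl
  have huniv' : ∀ (m : ℕ) (F : SimpleGraph (Fin m)), F.IsAcyclic →
      ∃ φ : F ↪g N, N.IsClosedSet (Set.range φ) := fun m F hF => by
    obtain ⟨f, hf, hadj, hcl⟩ := huniv m F hF
    exact ⟨⟨⟨f, hf⟩, (hadj _ _).symm⟩, fun v hv _ ⟨a, ha⟩ => ha ▸ hcl v hv a⟩
  obtain ⟨φ, hφ⟩ := exists_embedding_isClosedSet_range_of_fin huniv'
    (hB.bot_boxProd (ι := Fin (A.card + 1)))
  obtain ⟨i, hi⟩ := exists_fiber_notMem_finset φ.injective A (by simp)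
  have hcopy : N.IsClosedSet (Set.range ((boxProdRight ⊥ B i).trans φ)) := by
    rw [RelEmbedding.coe_trans, Set.range_comp]
    exact hφ.image_embedding (isClosedSet_range_boxProdRight_bot B i)
  obtain ⟨ψ, hψ, hψg⟩ :=
    exists_embedding_extend_of_isClosedSet hA hg hgiso hgcl _ hcopy hi
  exact ⟨ψ, ψ.injective, fun w w' => ψ.map_rel_iff.symm, hψg,
    fun v hv w => hψ v hv _ ⟨w, rfl⟩⟩

/-- Let `N` be an acyclic simple graph into which every finite acyclic graph admits a
closed embedding (an embedding whose image has no outside vertex of `N` adjacent to it).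
Then `N` is *-homogeneous: for every finite closed set `A` of vertices of `N` and every
finite acyclic graph `B` containing `A` as an induced subgraph with no edge between `A`
and `B \ A`, there is a closed embedding of `B` into `N` which is the identity on `A`. -/
theorem stmt_12 {V : Type*} (N : SimpleGraph V) (hN : N.IsAcyclic)
    (huniv : ∀ (n : ℕ) (F : SimpleGraph (Fin n)), F.IsAcyclic →
      ∃ f : Fin n → V, Function.Injective f ∧
        (∀ a b : Fin n, F.Adj a b ↔ N.Adj (f a) (f b)) ∧
        (∀ v : V, v ∉ Set.range f → ∀ a : Fin n, ¬ N.Adj v (f a))) :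
    ∀ (A : Finset V),
      -- A is closed in N
      (∀ v : V, v ∉ A → ∀ a ∈ A, ¬ N.Adj v a) →
      ∀ (n : ℕ) (B : SimpleGraph (Fin n)), B.IsAcyclic →
        ∀ g : {a : V // a ∈ A} → Fin n, Function.Injective g →
          -- B contains A as an induced subgraph (via g) ...
          (∀ a b : {a : V // a ∈ A}, N.Adj a.1 b.1 ↔ B.Adj (g a) (g b)) →
          -- ... with no edge of B between A and B \ A
          (∀ (a : {a : V // a ∈ A}) (w : Fin n), w ∉ Set.range g → ¬ B.Adj (g a) w) →
          -- then B closedly embeds into N over A: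
          ∃ f : Fin n → V, Function.Injective f ∧
            (∀ w w' : Fin n, B.Adj w w' ↔ N.Adj (f w) (f w')) ∧
            (∀ a : {a : V // a ∈ A}, f (g a) = a.1) ∧
            (∀ v : V, v ∉ Set.range f → ∀ w : Fin n, ¬ N.Adj v (f w)) :=
  stmt_12_general N huniv
end

section
/- Let N be an acyclic simple graph. Then every finite acyclic graph F admits an embedding into N whose image is a union of connected components of N, if and only if every finite tree is isomorphic to infinitely many distinct connected components of N. -/
/-!
An embedding of `F` into `N` whose image is a union of connected components amounts to an
injective assignment, to each component of `F`, of an isomorphic component of `N`. The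
components of a finite acyclic graph are finite trees, so such an assignment exists as soon as
every finite tree is isomorphic to infinitely many components of `N`. Conversely, embedding `k`
disjoint copies of a finite tree `T` in this way exhibits `k` distinct components of `N`
isomorphic to `T`, for every `k`.
-/

open Function

lemma Set.infinite_of_forall_exists_injective_fin {α : Type*} {s : Set α}
    (h : ∀ k : ℕ, ∃ f : Fin k → α, Injective f ∧ ∀ i, f i ∈ s) : s.Infinite := by
  intro hs
  have := hs.to_subtype
  obtain ⟨f, hf, hfs⟩ := h (Nat.card s + 1)
  have := Nat.card_le_card_of_injective (fun i ↦ (⟨f i, hfs i⟩ : s))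
    fun i j hij ↦ hf (congrArg Subtype.val hij)
  simp at this

lemma exists_injective_forall_mem_of_infinite {ι α : Type*} [Finite ι] (S : ι → Set α)
    (hS : ∀ i, (S i).Infinite) : ∃ g : ι → α, Injective g ∧ ∀ i, g i ∈ S i := by
  classical
  have := Fintype.ofFinite ι
  choose t ht using fun i ↦ (hS i).exists_subset_card_eq (Fintype.card ι)
  -- Hall's condition holds because every `t i` alone is as large as `ι`.
  obtain ⟨g, hg, hgt⟩ := (Finset.all_card_le_biUnion_card_iff_exists_injective t).mp fun s ↦ by
    obtain rfl | ⟨i, hi⟩ := s.eq_empty_or_nonempty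
    · simp
    · calc s.card ≤ Fintype.card ι := s.card_le_univ
        _ = (t i).card := (ht i).2.symm
        _ ≤ (s.biUnion t).card := Finset.card_le_card (Finset.subset_biUnion_of_mem t hi)
  exact ⟨g, hg, fun i ↦ (ht i).1 (hgt i)⟩

namespace SimpleGraph

variable {V W X β : Type*} {G : SimpleGraph V} {H : SimpleGraph X} {N : SimpleGraph W}

def AdjClosed (G : SimpleGraph V) (s : Set V) : Prop :=
  ∀ ⦃v w⦄, G.Adj v w → v ∈ s → w ∈ s

lemma AdjClosed.mem_of_reachable {s : Set V} (hs : G.AdjClosed s) {v w : V}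
    (h : G.Reachable v w) (hv : v ∈ s) : w ∈ s := by
  obtain ⟨p⟩ := h
  induction p with
  | nil => exact hv
  | cons hadj _ ih => exact ih (hs hadj hv)

lemma AdjClosed.range_comp {φ : H ↪g N} {ψ : G ↪g H} (hφ : N.AdjClosed (Set.range φ))
    (hψ : H.AdjClosed (Set.range ψ)) : N.AdjClosed (Set.range (φ.comp ψ)) := by
  rintro _ w hadj ⟨v, rfl⟩
  obtain ⟨x, rfl⟩ := hφ hadj ⟨ψ v, rfl⟩
  obtain ⟨y, rfl⟩ := hψ (φ.map_adj_iff.mp hadj) ⟨v, rfl⟩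
  exact ⟨y, rfl⟩

lemma Connected.range_eq_supp (hG : G.Connected) (φ : G ↪g N)
    (hφ : N.AdjClosed (Set.range φ)) (v : V) :
    Set.range φ = (N.connectedComponentMk (φ v)).supp := by
  ext w
  constructor
  · rintro ⟨u, rfl⟩
    exact ConnectedComponent.sound ((hG.preconnected u v).map φ.toHom)
  · intro hw
    exact hφ.mem_of_reachable (ConnectedComponent.exact hw).symm ⟨v, rfl⟩

lemma exists_embedding_adjClosed_iff (F : SimpleGraph V) :
    (∃ f : V → W, Injective f ∧ (∀ a b, F.Adj a b ↔ N.Adj (f a) (f b)) ∧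
      ∀ v w, N.Adj v w → (v ∈ Set.range f ↔ w ∈ Set.range f)) ↔
    ∃ φ : F ↪g N, N.AdjClosed (Set.range φ) := by
  constructor
  · rintro ⟨f, hf, hadj, hrange⟩
    exact ⟨⟨⟨f, hf⟩, (hadj _ _).symm⟩, fun v w h ↦ (hrange v w h).mp⟩
  · rintro ⟨φ, hφ⟩
    exact ⟨φ, φ.injective, fun a b ↦ φ.map_adj_iff.symm, fun v w h ↦ ⟨hφ h, hφ h.symm⟩⟩

lemma IsAcyclic.comap_of_reachable_injective (f : G →g H)
    (hf : ∀ ⦃u v⦄, G.Reachable u v → f u = f v → u = v) (hH : H.IsAcyclic) :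
    G.IsAcyclic := by
  classical
  intro u p hp
  let s := {v | G.Reachable u v}
  have hps : ∀ x ∈ p.support, x ∈ s := fun x hx ↦ ⟨p.takeUntil x hx⟩
  have hq : (p.induce s hps).IsCycle := by
    rwa [← Walk.isCycle_map_iff_of_injective (f := (Embedding.induce (G := G) s).toHom)
      Subtype.val_injective, Walk.map_induce]
  refine hH.comap (f.comp (Embedding.induce s).toHom) ?_ _ hq
  rintro ⟨x, hx⟩ ⟨y, hy⟩ hxy
  exact Subtype.ext (hf (hx.symm.trans hy) hxy)

lemma IsAcyclic.boxProd_bot (hG : G.IsAcyclic) : (G □ (⊥ : SimpleGraph β)).IsAcyclic := by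
  refine IsAcyclic.comap_of_reachable_injective ⟨Prod.fst, fun h ↦ ?_⟩ (fun x y hxy h ↦ ?_) hG
  · simp only [boxProd_adj, bot_adj, false_and, or_false] at h
    exact h.1
  · exact Prod.ext h (reachable_bot.mp (reachable_boxProd.mp hxy).2)

lemma adjClosed_range_boxProdLeft (b : β) :
    (G □ (⊥ : SimpleGraph β)).AdjClosed (Set.range (boxProdLeft G ⊥ b)) := by
  rintro _ ⟨a, c⟩ hadj ⟨x, rfl⟩
  simp only [boxProdLeft_apply, boxProd_adj, bot_adj, false_and, or_false] at hadj
  exact ⟨a, by rw [boxProdLeft_apply, hadj.2]⟩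

lemma Connected.exists_injective_iso_of_boxProd_bot (hG : G.Connected)
    (φ : (G □ (⊥ : SimpleGraph β)) ↪g N) (hφ : N.AdjClosed (Set.range φ)) :
    ∃ c : β → N.ConnectedComponent, Injective c ∧ ∀ b, Nonempty (G ≃g N.induce (c b).supp) := by
  obtain ⟨v⟩ := hG.nonempty
  have hrange (b : β) : Set.range (φ.comp (boxProdLeft G ⊥ b)) =
      (N.connectedComponentMk (φ (v, b))).supp :=
    hG.range_eq_supp _ (hφ.range_comp (adjClosed_range_boxProdLeft b)) v
  refine ⟨fun b ↦ N.connectedComponentMk (φ (v, b)), fun b b' hbb' ↦ ?_,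
    fun b ↦ by rw [← hrange]; exact ⟨Embedding.isoInduceRange _⟩⟩
  obtain ⟨u, hu⟩ : φ (v, b') ∈ Set.range (φ.comp (boxProdLeft G ⊥ b)) := by
    rw [hrange]
    exact hbb'.symm
  exact congrArg Prod.snd (φ.injective hu)

section ComponentIsos

variable (g : G.ConnectedComponent → N.ConnectedComponent)
  (ψ : ∀ K, G.induce K.supp ≃g N.induce (g K).supp)

def homOfComponentIsos : G →g N :=
  homOfConnectedComponents G fun K ↦ (Embedding.induce (g K).supp).toHom.comp (ψ K).toHom

variable {g ψ}

lemma homOfComponentIsos_apply_of_mem {K : G.ConnectedComponent} {v : V} (hv : v ∈ K.supp) :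
    homOfComponentIsos g ψ v = ψ K ⟨v, hv⟩ := by
  subst hv
  rfl

lemma connectedComponentMk_homOfComponentIsos (v : V) :
    N.connectedComponentMk (homOfComponentIsos g ψ v) = g (G.connectedComponentMk v) :=
  (ψ _ _).2

end ComponentIsos

lemma exists_adjClosed_embedding_of_componentIsos
    {g : G.ConnectedComponent → N.ConnectedComponent}
    (ψ : ∀ K, G.induce K.supp ≃g N.induce (g K).supp) (hg : Injective g) :
    ∃ φ : G ↪g N, N.AdjClosed (Set.range φ) := by
  set f := homOfComponentIsos g ψ
  have mem_supp_of_mk_eq {a b : V}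
      (h : N.connectedComponentMk (f a) = N.connectedComponentMk (f b)) :
      b ∈ (G.connectedComponentMk a).supp := by
    rw [connectedComponentMk_homOfComponentIsos, connectedComponentMk_homOfComponentIsos] at h
    exact (hg h).symm
  refine ⟨⟨⟨f, fun a b hab ↦ ?_⟩, fun {a b} ↦ ⟨fun hadj ↦ ?_, f.map_adj⟩⟩, ?_⟩
  · have hb := mem_supp_of_mk_eq (congrArg _ hab)
    rw [homOfComponentIsos_apply_of_mem rfl, homOfComponentIsos_apply_of_mem hb] at hab
    exact congrArg Subtype.val ((ψ _).injective (Subtype.ext hab))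
  · change N.Adj (f a) (f b) at hadj
    have hb := mem_supp_of_mk_eq (ConnectedComponent.connectedComponentMk_eq_of_adj hadj)
    rw [homOfComponentIsos_apply_of_mem rfl, homOfComponentIsos_apply_of_mem hb] at hadj
    exact (ψ _).map_adj_iff.mp hadj
  · rintro _ w hadj ⟨a, rfl⟩
    have hw : w ∈ (g (G.connectedComponentMk a)).supp :=
      (ConnectedComponent.connectedComponentMk_eq_of_adj hadj).symm.trans
        (connectedComponentMk_homOfComponentIsos a)
    obtain ⟨⟨b, hb⟩, hψb⟩ := (ψ _).surjective ⟨w, hw⟩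
    exact ⟨b, (homOfComponentIsos_apply_of_mem hb).trans (congrArg Subtype.val hψb)⟩

lemma exists_adjClosed_embedding_of_infinite [Finite V]
    (h : ∀ K : G.ConnectedComponent,
      {c : N.ConnectedComponent | Nonempty (G.induce K.supp ≃g N.induce c.supp)}.Infinite) :
    ∃ φ : G ↪g N, N.AdjClosed (Set.range φ) := by
  obtain ⟨g, hg, hgK⟩ := exists_injective_forall_mem_of_infinite _ h
  exact exists_adjClosed_embedding_of_componentIsos (fun K ↦ (hgK K).some) hg

lemma exists_adjClosed_embedding_of_fin
    (h : ∀ n (F : SimpleGraph (Fin n)), F.IsAcyclic → ∃ φ : F ↪g N, N.AdjClosed (Set.range φ))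
    [Finite V] (hG : G.IsAcyclic) : ∃ φ : G ↪g N, N.AdjClosed (Set.range φ) := by
  obtain ⟨n, ⟨e⟩⟩ := Finite.exists_equiv_fin V
  let ι := Iso.map e G
  obtain ⟨φ, hφ⟩ := h n _ (ι.isAcyclic_iff.mp hG)
  refine ⟨φ.comp ι.toEmbedding, ?_⟩
  change N.AdjClosed (Set.range (φ ∘ ι))
  rwa [ι.surjective.range_comp]

lemma infinite_setOf_iso_of_fin
    (h : ∀ n (T : SimpleGraph (Fin n)), 0 < n → T.Connected → T.IsAcyclic →
      {c : N.ConnectedComponent | Nonempty (T ≃g N.induce c.supp)}.Infinite)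
    [Finite V] (hG : G.Connected) (hG' : G.IsAcyclic) :
    {c : N.ConnectedComponent | Nonempty (G ≃g N.induce c.supp)}.Infinite := by
  obtain ⟨n, ⟨e⟩⟩ := Finite.exists_equiv_fin V
  let ι := Iso.map e G
  have hn : 0 < n := Fin.pos_iff_nonempty.mpr (hG.nonempty.map e)
  refine (h n _ hn (ι.connected_iff.mp hG) (ι.isAcyclic_iff.mp hG')).mono ?_
  rintro c ⟨ψ⟩
  exact ⟨ι.trans ψ⟩

end SimpleGraph

theorem stmt_13_general {V : Type*} (N : SimpleGraph V) :
    (∀ (n : ℕ) (F : SimpleGraph (Fin n)), F.IsAcyclic →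
      ∃ f : Fin n → V, Function.Injective f ∧
        (∀ a b : Fin n, F.Adj a b ↔ N.Adj (f a) (f b)) ∧
        -- the image is a union of connected components of N
        (∀ v w : V, N.Adj v w → (v ∈ Set.range f ↔ w ∈ Set.range f))) ↔
    (∀ (n : ℕ) (T : SimpleGraph (Fin n)), 0 < n → T.Connected → T.IsAcyclic →
      {c : N.ConnectedComponent |
        Nonempty (T ≃g (N.induce (c.supp)))}.Infinite) := by
  simp only [SimpleGraph.exists_embedding_adjClosed_iff]
  constructor
  · intro h n T _ hT hT'
    refine Set.infinite_of_forall_exists_injective_fin fun k ↦ ?_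
    obtain ⟨φ, hφ⟩ :=
      SimpleGraph.exists_adjClosed_embedding_of_fin h (hT'.boxProd_bot (β := Fin k))
    exact hT.exists_injective_iso_of_boxProd_bot φ hφ
  · intro h n F hF
    exact SimpleGraph.exists_adjClosed_embedding_of_infinite fun K ↦
      SimpleGraph.infinite_setOf_iso_of_fin h K.connected_toSimpleGraph (hF.induce _)

/-- Let `N` be an acyclic simple graph.  Every finite acyclic graph admits an embedding
into `N` whose image is a union of connected components of `N`, if and only if every
finite tree (nonempty connected acyclic finite graph) is isomorphic to infinitely many
distinct connected components of `N`. -/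
theorem stmt_13 {V : Type*} (N : SimpleGraph V) (hN : N.IsAcyclic) :
    (∀ (n : ℕ) (F : SimpleGraph (Fin n)), F.IsAcyclic →
      ∃ f : Fin n → V, Function.Injective f ∧
        (∀ a b : Fin n, F.Adj a b ↔ N.Adj (f a) (f b)) ∧
        -- the image is a union of connected components of N
        (∀ v w : V, N.Adj v w → (v ∈ Set.range f ↔ w ∈ Set.range f))) ↔
    (∀ (n : ℕ) (T : SimpleGraph (Fin n)), 0 < n → T.Connected → T.IsAcyclic →
      {c : N.ConnectedComponent |
        Nonempty (T ≃g (N.induce (c.supp)))}.Infinite) :=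
  stmt_13_general N
end
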